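/- Let ξ₁, ξ₂ : ℂ → ℂ be smooth with |ξ₁|² = |ξ₂|² = 1 everywhere, let a : ℂ → ℝ be positive smooth, and suppose each ξ_β satisfies ∂̄∂ξ_β + (∂ξ_β)(∂̄ξ̄_β)ξ_β + (∂̄ ln a)(∂ξ_β) = 0. Then the product η = ξ₁ξ₂ satisfies ∂̄∂η + (∂η)(∂̄η̄)η + (∂̄ ln a)(∂η) = 0. -/

import Mathlib

open Complex ComplexConjugate

noncomputable def wd (f : ℂ → ℂ) (z : ℂ) : ℂ :=
  (fderiv ℝ f z 1 - Complex.I * fderiv ℝ f z Complex.I) / 2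

noncomputable def wdb (f : ℂ → ℂ) (z : ℂ) : ℂ :=
  (fderiv ℝ f z 1 + Complex.I * fderiv ℝ f z Complex.I) / 2

noncomputable def lnC (a : ℂ → ℝ) (z : ℂ) : ℂ := (Real.log (a z) : ℂ)

lemma wd_mul (f g : ℂ → ℂ) (z : ℂ) (hf : DifferentiableAt ℝ f z)
    (hg : DifferentiableAt ℝ g z) :
    wd (fun w => f w * g w) z = wd f z * g z + f z * wd g z := by
  unfold wd
  rw [fderiv_fun_mul hf hg]
  simp only [ContinuousLinearMap.add_apply, ContinuousLinearMap.smul_apply, smul_eq_mul]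
  ring

lemma wdb_mul (f g : ℂ → ℂ) (z : ℂ) (hf : DifferentiableAt ℝ f z)
    (hg : DifferentiableAt ℝ g z) :
    wdb (fun w => f w * g w) z = wdb f z * g z + f z * wdb g z := by
  unfold wdb
  rw [fderiv_fun_mul hf hg]
  simp only [ContinuousLinearMap.add_apply, ContinuousLinearMap.smul_apply, smul_eq_mul]
  ring

lemma wdb_add (f g : ℂ → ℂ) (z : ℂ) (hf : DifferentiableAt ℝ f z)
    (hg : DifferentiableAt ℝ g z) :
    wdb (fun w => f w + g w) z = wdb f z + wdb g z := by
  unfold wdb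
  rw [fderiv_fun_add hf hg]
  simp only [ContinuousLinearMap.add_apply]
  ring

lemma contDiff_wd {f : ℂ → ℂ} (hf : ContDiff ℝ (⊤ : ℕ∞) f) : ContDiff ℝ (⊤ : ℕ∞) (wd f) := by
  have h := hf.fderiv_right (m := (⊤ : ℕ∞)) le_rfl
  have h1 : ContDiff ℝ (⊤ : ℕ∞) (fun z => fderiv ℝ f z 1) := h.clm_apply contDiff_const
  have h2 : ContDiff ℝ (⊤ : ℕ∞) (fun z => fderiv ℝ f z Complex.I) := h.clm_apply contDiff_const
  unfold wd
  exact (h1.sub (contDiff_const.mul h2)).div_const 2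

example : True := trivial

lemma contDiff_conj {f : ℂ → ℂ} (hf : ContDiff ℝ (⊤ : ℕ∞) f) :
    ContDiff ℝ (⊤ : ℕ∞) (fun w => conj (f w)) := Complex.conjCLE.contDiff.comp hf

lemma wdb_one (z : ℂ) : wdb (fun _ : ℂ => (1 : ℂ)) z = 0 := by
  unfold wdb
  simp

lemma key (f : ℂ → ℂ) (hf : ContDiff ℝ (⊤ : ℕ∞) f) (hmod : ∀ z, f z * conj (f z) = 1) (z : ℂ) :
    wdb f z * conj (f z) + f z * wdb (fun w => conj (f w)) z = 0 := by
  have h : (fun w => f w * conj (f w)) = fun _ : ℂ => (1 : ℂ) := funext hmod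
  have := wdb_mul f (fun w => conj (f w)) z (hf.differentiable (by simp) z)
    ((contDiff_conj hf).differentiable (by simp) z)
  rw [h, wdb_one] at this
  simpa using this.symm

theorem stmt9 (ξ₁ ξ₂ : ℂ → ℂ) (a : ℂ → ℝ)
    (hξ₁ : ContDiff ℝ (⊤ : ℕ∞) ξ₁) (hξ₂ : ContDiff ℝ (⊤ : ℕ∞) ξ₂)
    (hmod₁ : ∀ z, ξ₁ z * conj (ξ₁ z) = 1) (hmod₂ : ∀ z, ξ₂ z * conj (ξ₂ z) = 1)
    (ha : ContDiff ℝ (⊤ : ℕ∞) a) (hapos : ∀ z, 0 < a z)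
    (heq₁ : ∀ z, wdb (wd ξ₁) z + wd ξ₁ z * wdb (fun w => conj (ξ₁ w)) z * ξ₁ z
        + wdb (lnC a) z * wd ξ₁ z = 0)
    (heq₂ : ∀ z, wdb (wd ξ₂) z + wd ξ₂ z * wdb (fun w => conj (ξ₂ w)) z * ξ₂ z
        + wdb (lnC a) z * wd ξ₂ z = 0) :
    ∀ z, wdb (wd (fun w => ξ₁ w * ξ₂ w)) z
        + wd (fun w => ξ₁ w * ξ₂ w) z * wdb (fun w => conj (ξ₁ w * ξ₂ w)) z * (ξ₁ z * ξ₂ z)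
        + wdb (lnC a) z * wd (fun w => ξ₁ w * ξ₂ w) z = 0 := by
  intro z
  have d₁ : ∀ w, DifferentiableAt ℝ ξ₁ w := fun w => hξ₁.differentiable (by simp) w
  have d₂ : ∀ w, DifferentiableAt ℝ ξ₂ w := fun w => hξ₂.differentiable (by simp) w
  have hc₁ : ContDiff ℝ (⊤ : ℕ∞) (fun w => conj (ξ₁ w)) := contDiff_conj hξ₁
  have hc₂ : ContDiff ℝ (⊤ : ℕ∞) (fun w => conj (ξ₂ w)) := contDiff_conj hξ₂
  have hw1 : ContDiff ℝ (⊤ : ℕ∞) (wd ξ₁) := contDiff_wd hξ₁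
  have hw2 : ContDiff ℝ (⊤ : ℕ∞) (wd ξ₂) := contDiff_wd hξ₂
  have hwd : wd (fun w => ξ₁ w * ξ₂ w) = fun w => wd ξ₁ w * ξ₂ w + ξ₁ w * wd ξ₂ w :=
    funext fun w => wd_mul _ _ w (d₁ w) (d₂ w)
  have e1 : wdb (wd (fun w => ξ₁ w * ξ₂ w)) z
      = wdb (wd ξ₁) z * ξ₂ z + wd ξ₁ z * wdb ξ₂ z
        + (wdb ξ₁ z * wd ξ₂ z + ξ₁ z * wdb (wd ξ₂) z) := by
    rw [hwd, wdb_add _ _ z ((hw1.mul hξ₂).differentiable (by simp) z)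
        ((hξ₁.mul hw2).differentiable (by simp) z),
      wdb_mul _ _ z (hw1.differentiable (by simp) z) (d₂ z),
      wdb_mul _ _ z (d₁ z) (hw2.differentiable (by simp) z)]
  have hconjη : (fun w => conj (ξ₁ w * ξ₂ w))
      = fun w => conj (ξ₁ w) * conj (ξ₂ w) := funext fun w => map_mul _ _ _
  have e2 : wdb (fun w => conj (ξ₁ w * ξ₂ w)) z
      = wdb (fun w => conj (ξ₁ w)) z * conj (ξ₂ z)
        + conj (ξ₁ z) * wdb (fun w => conj (ξ₂ w)) z := by
    rw [hconjη, wdb_mul _ _ z (hc₁.differentiable (by simp) z) (hc₂.differentiable (by simp) z)]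
  have e3 : wd (fun w => ξ₁ w * ξ₂ w) z = wd ξ₁ z * ξ₂ z + ξ₁ z * wd ξ₂ z :=
    wd_mul _ _ z (d₁ z) (d₂ z)
  have K₁ := key ξ₁ hξ₁ hmod₁ z
  have K₂ := key ξ₂ hξ₂ hmod₂ z
  have M₁ := hmod₁ z
  have M₂ := hmod₂ z
  have E₁ := heq₁ z
  have E₂ := heq₂ z
  rw [e1, e2, e3]
  set w₁ := wd ξ₁ z
  set w₂ := wd ξ₂ z
  set u₁ := wdb ξ₁ z
  set u₂ := wdb ξ₂ z
  set b₁ := wdb (fun w => conj (ξ₁ w)) z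
  set b₂ := wdb (fun w => conj (ξ₂ w)) z
  set x := ξ₁ z
  set y := ξ₂ z
  linear_combination y * E₁ + x * E₂ + (w₁ * y) * K₂ + (w₂ * x) * K₁
    + (w₁ * b₂ * y ^ 2 + w₂ * b₂ * x * y - u₁ * w₂) * M₁
    + (w₂ * b₁ * x ^ 2 + w₁ * b₁ * x * y - w₁ * u₂) * M₂
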